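/- arXiv:1508.03515 — 4 statements merged into one kernel-verified Lean document; each statement's English description precedes it below -/
import Mathlib

section
/- Let G be the 6-vertex graph obtained from a 4-cycle v_1 v_2 v_3 v_4 by subdividing the edge v_1 v_2 once and adding a new vertex adjacent to both v_1 and v_2. Then mad(G) = 7/3 and χ'_s(G) > 6. -/
open SimpleGraph

/-- Two distinct edges of `G` are *in conflict* (at distance at most two) if they share an
endpoint or are both incident to a common third edge of `G`. -/
def EdgeConflict {V : Type*} (G : SimpleGraph V) (e₁ e₂ : Sym2 V) : Prop :=
  e₁ ∈ G.edgeSet ∧ e₂ ∈ G.edgeSet ∧ e₁ ≠ e₂ ∧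
    ((∃ v, v ∈ e₁ ∧ v ∈ e₂) ∨
      ∃ e₃ ∈ G.edgeSet, e₃ ≠ e₁ ∧ e₃ ≠ e₂ ∧ (∃ v, v ∈ e₁ ∧ v ∈ e₃) ∧ ∃ w, w ∈ e₂ ∧ w ∈ e₃)

/-- A strong edge-coloring: edges at distance at most two receive distinct colors. -/
def IsStrongEdgeColoring {V α : Type*} (G : SimpleGraph V) (c : Sym2 V → α) : Prop :=
  ∀ e₁ e₂ : Sym2 V, EdgeConflict G e₁ e₂ → c e₁ ≠ c e₂

/-- The strong chromatic index: the least number of colors in a strong edge-coloring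
(`⊤` if no finite strong edge-coloring exists). -/
noncomputable def strongChromaticIndex {V : Type*} (G : SimpleGraph V) : ℕ∞ :=
  sInf {n : ℕ∞ | ∃ k : ℕ, n = (k : ℕ∞) ∧ ∃ c : Sym2 V → Fin k, IsStrongEdgeColoring G c}

/-- `mad(G) < q`: every subgraph `H` with at least one vertex satisfies `2|E(H)|/|V(H)| < q`. -/
def MadLT {V : Type*} (G : SimpleGraph V) (q : ℚ) : Prop :=
  ∀ H : G.Subgraph, H.verts.Nonempty → 2 * (H.edgeSet.ncard : ℚ) < q * (H.verts.ncard : ℚ)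

/-- `mad(G) = q`: the maximum of `2|E(H)|/|V(H)|` over nonempty subgraphs `H` equals `q`. -/
def MadEq {V : Type*} (G : SimpleGraph V) (q : ℚ) : Prop :=
  (∀ H : G.Subgraph, H.verts.Nonempty → 2 * (H.edgeSet.ncard : ℚ) ≤ q * (H.verts.ncard : ℚ)) ∧
    ∃ H : G.Subgraph, H.verts.Nonempty ∧ 2 * (H.edgeSet.ncard : ℚ) = q * (H.verts.ncard : ℚ)

/-- `G` contains a subgraph isomorphic to `H`. -/
def ContainsCopy {W V : Type*} (H : SimpleGraph W) (G : SimpleGraph V) : Prop :=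
  ∃ f : W → V, Function.Injective f ∧ ∀ a b : W, H.Adj a b → G.Adj (f a) (f b)

/-- `Sgraph k` is a `k`-cycle with a pendant edge attached at each vertex. -/
def Sgraph (k : ℕ) [NeZero k] : SimpleGraph (Fin k ⊕ Fin k) :=
  SimpleGraph.fromEdgeSet
    {e | ∃ i : Fin k, e = s(Sum.inl i, Sum.inl (i + 1)) ∨ e = s(Sum.inl i, Sum.inr i)}

/-- `S₄`: a `4`-cycle `0 1 2 3` with pendant edges at the adjacent vertices `0` and `1`. -/
def S4graph : SimpleGraph (Fin 6) :=
  SimpleGraph.fromEdgeSet {s(0, 1), s(1, 2), s(2, 3), s(3, 0), s(0, 4), s(1, 5)}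

/-- `v` is a vertex of the contracted graph `ct(G)`, i.e. `v` does not have degree `1`. -/
def InCt {V : Type*} (G : SimpleGraph V) (v : V) : Prop := (G.neighborSet v).ncard ≠ 1

/-- Adjacency in the contracted graph `ct(G)`. -/
def CtAdj {V : Type*} (G : SimpleGraph V) (u v : V) : Prop :=
  G.Adj u v ∧ InCt G u ∧ InCt G v

/-- The degree of a vertex in the contracted graph `ct(G)`. -/
noncomputable def ctDeg {V : Type*} (G : SimpleGraph V) (v : V) : ℕ :=
  {u | CtAdj G v u}.ncard

/-- A `2⊥`-vertex: a vertex of `ct(G)` of degree `2` in `ct(G)`. -/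
def IsTwoPerp {V : Type*} (G : SimpleGraph V) (v : V) : Prop :=
  InCt G v ∧ ctDeg G v = 2

/-- The set of edges of a path `p` with `n` edges. -/
def pathEdges {V : Type*} (n : ℕ) (p : Fin (n + 1) → V) : Set (Sym2 V) :=
  {e | ∃ i : Fin n, e = s(p i.castSucc, p i.succ)}

/-- A `t`-caterpillar: two vertices of degree at least `3` in `ct(G)` joined by a path
whose `t` internal vertices are all `2⊥`-vertices. -/
structure IsCaterpillar {V : Type*} (G : SimpleGraph V) (t : ℕ) (p : Fin (t + 2) → V) : Prop where
  inj : Function.Injective p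
  adj : ∀ i : Fin (t + 1), G.Adj (p i.castSucc) (p i.succ)
  end₀ : 3 ≤ ctDeg G (p 0)
  end₁ : 3 ≤ ctDeg G (p (Fin.last (t + 1)))
  internal : ∀ i : Fin (t + 2), i ≠ 0 → i ≠ Fin.last (t + 1) → IsTwoPerp G (p i)

/-- A path with `n` edges in the contracted graph `ct(G)` all of whose internal vertices
are `2⊥`-vertices. -/
structure IsCtPath {V : Type*} (G : SimpleGraph V) (n : ℕ) (p : Fin (n + 1) → V) : Prop where
  inj : Function.Injective p
  adj : ∀ i : Fin n, CtAdj G (p i.castSucc) (p i.succ)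
  internal : ∀ i : Fin (n + 1), i ≠ 0 → i ≠ Fin.last n → IsTwoPerp G (p i)

/-- No internal vertex of the path `p` lies on the path `q`. -/
def IntDisjoint {V : Type*} {m n : ℕ} (p : Fin (m + 1) → V) (q : Fin (n + 1) → V) : Prop :=
  ∀ i : Fin (m + 1), i ≠ 0 → i ≠ Fin.last m → ∀ j : Fin (n + 1), p i ≠ q j

/-- Two paths are internally disjoint. -/
def PDisj {V : Type*} {m n : ℕ} (p : Fin (m + 1) → V) (q : Fin (n + 1) → V) : Prop :=
  IntDisjoint p q ∧ IntDisjoint q p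

/-- The configuration `Y(t₁,t₂,t₃)`: a vertex `v` of degree at least `3` in `ct(G)` together
with three internally disjoint paths of lengths `t₁+1`, `t₂+1`, `t₃+1` in `ct(G)` with common
endpoint `v`, all of whose internal vertices are `2⊥`-vertices. -/
structure IsYConfig {V : Type*} (G : SimpleGraph V) (t₁ t₂ t₃ : ℕ) (v : V)
    (p₁ : Fin (t₁ + 2) → V) (p₂ : Fin (t₂ + 2) → V) (p₃ : Fin (t₃ + 2) → V) : Prop where
  deg : 3 ≤ ctDeg G v
  path₁ : IsCtPath G (t₁ + 1) p₁
  path₂ : IsCtPath G (t₂ + 1) p₂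
  path₃ : IsCtPath G (t₃ + 1) p₃
  start₁ : p₁ 0 = v
  start₂ : p₂ 0 = v
  start₃ : p₃ 0 = v
  disj₁₂ : PDisj p₁ p₂
  disj₁₃ : PDisj p₁ p₃
  disj₂₃ : PDisj p₂ p₃

/-- The configuration `H(t₁,t₂;r;s₁,s₂)`: two vertices `v`, `u` of degree `3` in `ct(G)` and
five internally disjoint paths in `ct(G)` whose internal vertices are `2⊥`-vertices: paths of
lengths `t₁+1`, `t₂+1` with endpoint `v`, a path of length `r+1` joining `v` and `u`, and
paths of lengths `s₁+1`, `s₂+1` with endpoint `u`. -/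
structure IsHConfig {V : Type*} (G : SimpleGraph V) (t₁ t₂ r s₁ s₂ : ℕ) (v u : V)
    (p₁ : Fin (t₁ + 2) → V) (p₂ : Fin (t₂ + 2) → V) (q : Fin (r + 2) → V)
    (p₃ : Fin (s₁ + 2) → V) (p₄ : Fin (s₂ + 2) → V) : Prop where
  degv : ctDeg G v = 3
  degu : ctDeg G u = 3
  path₁ : IsCtPath G (t₁ + 1) p₁
  path₂ : IsCtPath G (t₂ + 1) p₂
  pathq : IsCtPath G (r + 1) q
  path₃ : IsCtPath G (s₁ + 1) p₃
  path₄ : IsCtPath G (s₂ + 1) p₄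
  start₁ : p₁ 0 = v
  start₂ : p₂ 0 = v
  startq : q 0 = v
  endq : q (Fin.last (r + 1)) = u
  start₃ : p₃ 0 = u
  start₄ : p₄ 0 = u
  disj₁₂ : PDisj p₁ p₂
  disj₁q : PDisj p₁ q
  disj₁₃ : PDisj p₁ p₃
  disj₁₄ : PDisj p₁ p₄
  disj₂q : PDisj p₂ q
  disj₂₃ : PDisj p₂ p₃
  disj₂₄ : PDisj p₂ p₄
  disjq₃ : PDisj q p₃
  disjq₄ : PDisj q p₄
  disj₃₄ : PDisj p₃ p₄

/-- The configuration `Φ(t,a₁,a₂,s)`: two vertices `v`, `u` of degree `3` in `ct(G)` and four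
internally disjoint paths in `ct(G)` whose internal vertices are `2⊥`-vertices: a path of
length `t+1` with endpoint `v`, paths of lengths `a₁+1` and `a₂+1` joining `v` and `u`, and a
path of length `s+1` with endpoint `u`. -/
structure IsPhiConfig {V : Type*} (G : SimpleGraph V) (t a₁ a₂ s : ℕ) (v u : V)
    (pt : Fin (t + 2) → V) (pa : Fin (a₁ + 2) → V) (pb : Fin (a₂ + 2) → V)
    (ps : Fin (s + 2) → V) : Prop where
  degv : ctDeg G v = 3
  degu : ctDeg G u = 3
  patht : IsCtPath G (t + 1) pt
  patha : IsCtPath G (a₁ + 1) pa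
  pathb : IsCtPath G (a₂ + 1) pb
  paths : IsCtPath G (s + 1) ps
  startt : pt 0 = v
  starta : pa 0 = v
  enda : pa (Fin.last (a₁ + 1)) = u
  startb : pb 0 = v
  endb : pb (Fin.last (a₂ + 1)) = u
  starts : ps 0 = u
  disjtab : PDisj pt pa
  disjtb : PDisj pt pb
  disjts : PDisj pt ps
  disjab : PDisj pa pb
  disjas : PDisj pa ps
  disjbs : PDisj pb ps

/-- A set `D` of edges of `G` is `k`-reducible: there is `D' ⊆ D` such that any two edges of
`G - D'` at distance at most two in `G` are at distance at most two in `G - D'`, and every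
strong `k`-edge-coloring of `G - D'` extends to a strong `k`-edge-coloring of `G`. -/
def IsReducible {V : Type*} (G : SimpleGraph V) (D : Set (Sym2 V)) (k : ℕ) : Prop :=
  ∃ D' ⊆ D,
    (∀ e₁ e₂ : Sym2 V, e₁ ∈ (G.deleteEdges D').edgeSet → e₂ ∈ (G.deleteEdges D').edgeSet →
      EdgeConflict G e₁ e₂ → EdgeConflict (G.deleteEdges D') e₁ e₂) ∧
    ∀ c : Sym2 V → Fin k, IsStrongEdgeColoring (G.deleteEdges D') c →
      ∃ c' : Sym2 V → Fin k, IsStrongEdgeColoring G c' ∧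
        ∀ e ∈ (G.deleteEdges D').edgeSet, c' e = c e

/-- Every configuration `Y(t₁,t₂,t₃)` in `G` is `k`-reducible. -/
def YReducible {V : Type*} (G : SimpleGraph V) (t₁ t₂ t₃ k : ℕ) : Prop :=
  ∀ (v : V) (p₁ : Fin (t₁ + 2) → V) (p₂ : Fin (t₂ + 2) → V) (p₃ : Fin (t₃ + 2) → V),
    IsYConfig G t₁ t₂ t₃ v p₁ p₂ p₃ →
    IsReducible G (pathEdges (t₁ + 1) p₁ ∪ pathEdges (t₂ + 1) p₂ ∪ pathEdges (t₃ + 1) p₃) k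

/-- Every configuration `H(t₁,t₂;r;s₁,s₂)` in `G` is `k`-reducible. -/
def HReducible {V : Type*} (G : SimpleGraph V) (t₁ t₂ r s₁ s₂ k : ℕ) : Prop :=
  ∀ (v u : V) (p₁ : Fin (t₁ + 2) → V) (p₂ : Fin (t₂ + 2) → V) (q : Fin (r + 2) → V)
    (p₃ : Fin (s₁ + 2) → V) (p₄ : Fin (s₂ + 2) → V),
    IsHConfig G t₁ t₂ r s₁ s₂ v u p₁ p₂ q p₃ p₄ →
    IsReducible G (pathEdges (t₁ + 1) p₁ ∪ pathEdges (t₂ + 1) p₂ ∪ pathEdges (r + 1) q ∪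
      pathEdges (s₁ + 1) p₃ ∪ pathEdges (s₂ + 1) p₄) k

/-- Every configuration `Φ(t,a₁,a₂,s)` in `G` is `k`-reducible. -/
def PhiReducible {V : Type*} (G : SimpleGraph V) (t a₁ a₂ s k : ℕ) : Prop :=
  ∀ (v u : V) (pt : Fin (t + 2) → V) (pa : Fin (a₁ + 2) → V) (pb : Fin (a₂ + 2) → V)
    (ps : Fin (s + 2) → V),
    IsPhiConfig G t a₁ a₂ s v u pt pa pb ps →
    IsReducible G (pathEdges (t + 1) pt ∪ pathEdges (a₁ + 1) pa ∪ pathEdges (a₂ + 1) pb ∪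
      pathEdges (s + 1) ps) k

/-- A graph is 2-connected: connected, at least three vertices, and no cut vertex. -/
def TwoConnected {W : Type*} (H : SimpleGraph W) : Prop :=
  H.Connected ∧ 3 ≤ Nat.card W ∧ ∀ w : W, ((H.induce {x | x ≠ w}).Connected)

/-- `χ'_{ℓ,s}(G) ≤ k`: whenever each edge gets a list of at least `k` colors, there is a
strong edge-coloring choosing each edge's color from its list. -/
def StrongListChromaticIndexLE {V : Type*} (G : SimpleGraph V) (k : ℕ) : Prop :=
  ∀ (C : Type) (L : Sym2 V → Finset C), (∀ e ∈ G.edgeSet, k ≤ (L e).card) →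
    ∃ c : Sym2 V → C, (∀ e ∈ G.edgeSet, c e ∈ L e) ∧ IsStrongEdgeColoring G c

/-- The prism: two triangles joined by a perfect matching (`K₃ □ K₂`). -/
def prismGraph : SimpleGraph (Fin 6) :=
  SimpleGraph.fromEdgeSet
    {s(0, 1), s(1, 2), s(0, 2), s(3, 4), s(4, 5), s(3, 5), s(0, 3), s(1, 4), s(2, 5)}

/-- The vertex type of `ex₃(Θ(t₁,t₂,t₃))`: the branch vertices `x`, `y`, the internal vertices
of the three paths, and one pendant vertex for each internal vertex. -/
def ThetaExV (t : Fin 3 → ℕ) : Type :=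
  Fin 2 ⊕ (Σ i : Fin 3, Fin (t i)) ⊕ (Σ i : Fin 3, Fin (t i))

/-- `ex₃(Θ(t₁,t₂,t₃))`: two vertices `x = inl 0`, `y = inl 1` joined by three internally
disjoint paths of lengths `t 0 + 1`, `t 1 + 1`, `t 2 + 1`, with a pendant edge attached at
each internal (degree-2) vertex. -/
def ThetaEx (t : Fin 3 → ℕ) : SimpleGraph (ThetaExV t) :=
  SimpleGraph.fromEdgeSet
    ({e | ∃ i : Fin 3, t i = 0 ∧ e = s(Sum.inl 0, Sum.inl 1)} ∪
     {e | ∃ (i : Fin 3) (j : Fin (t i)), (j : ℕ) = 0 ∧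
        e = s(Sum.inl 0, Sum.inr (Sum.inl ⟨i, j⟩))} ∪
     {e | ∃ (i : Fin 3) (j k : Fin (t i)), (k : ℕ) = (j : ℕ) + 1 ∧
        e = s(Sum.inr (Sum.inl ⟨i, j⟩), Sum.inr (Sum.inl ⟨i, k⟩))} ∪
     {e | ∃ (i : Fin 3) (j : Fin (t i)), (j : ℕ) + 1 = t i ∧
        e = s(Sum.inr (Sum.inl ⟨i, j⟩), Sum.inl 1)} ∪
     {e | ∃ (i : Fin 3) (j : Fin (t i)),
        e = s(Sum.inr (Sum.inl ⟨i, j⟩), Sum.inr (Sum.inr ⟨i, j⟩))})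

/-- The graph of Figure 2: a 4-cycle `0 1 2 3` with the edge `0 1` subdivided by vertex `4`,
and a new vertex `5` adjacent to both `0` and `1`. -/
def houseGraph : SimpleGraph (Fin 6) :=
  SimpleGraph.fromEdgeSet {s(0, 4), s(4, 1), s(1, 2), s(2, 3), s(3, 0), s(0, 5), s(1, 5)}

/-- The graph of Figure 3: vertices `x = 0`, `y = 1` joined by internally disjoint paths
`0 2 1`, `0 3 1`, `0 4 5 1`, together with the path `2 6 7 3`. -/
def figThreeGraph : SimpleGraph (Fin 8) :=
  SimpleGraph.fromEdgeSet
    {s(0, 2), s(2, 1), s(0, 3), s(3, 1), s(0, 4), s(4, 5), s(5, 1), s(2, 6), s(6, 7), s(7, 3)}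

/-! The seven edges of the graph pairwise share an endpoint or are joined by a third edge, so a
strong edge-coloring needs seven colors. For `mad`, every vertex set `S` spans at most `7|S|/6`
edges (checked over all `2⁶` sets), with equality for the whole graph. -/

section

variable {V : Type*} {G : SimpleGraph V}

lemma card_le_strongChromaticIndex_of_pairwise {E : Finset (Sym2 V)}
    (hE : (E : Set (Sym2 V)).Pairwise (EdgeConflict G)) :
    (E.card : ℕ∞) ≤ strongChromaticIndex G := by
  refine le_sInf ?_
  rintro n ⟨k, rfl, c, hc⟩
  have hinj : Set.InjOn c E := fun e₁ he₁ e₂ he₂ hce =>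
    by_contra fun hne => hc e₁ e₂ (hE he₁ he₂ hne) hce
  have hk : E.card ≤ k := by
    simpa [Finset.card_image_of_injOn hinj] using Finset.card_le_univ (E.image c)
  exact_mod_cast hk

variable [DecidableEq V] {E : Finset (Sym2 V)}

lemma SimpleGraph.Subgraph.ncard_edgeSet_le_card_inter_sym2 (H : G.Subgraph) (hE : G.edgeSet = E)
    {S : Finset V} (hS : H.verts ⊆ S) : H.edgeSet.ncard ≤ (E ∩ S.sym2).card := by
  rw [← Set.ncard_coe_finset]
  refine Set.ncard_le_ncard (fun e he => ?_) (Finset.finite_toSet _)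
  rw [Finset.coe_inter, Set.mem_inter_iff, ← hE, Finset.mem_coe, Finset.mem_sym2_iff]
  exact ⟨H.edgeSet_subset he, fun v hv => hS (H.mem_verts_of_mem_edge he hv)⟩

lemma madEq_of_edgeSet_eq [Fintype V] [Nonempty V] (hE : G.edgeSet = E) {q : ℚ}
    (hle : ∀ S : Finset V, 2 * ((E ∩ S.sym2).card : ℚ) ≤ q * S.card)
    (heq : 2 * (E.card : ℚ) = q * Fintype.card V) : MadEq G q := by
  refine ⟨fun H _ => ?_, ⊤, Set.univ_nonempty, ?_⟩
  · have hS : H.verts ⊆ H.verts.toFinite.toFinset := by simp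
    have hH := H.ncard_edgeSet_le_card_inter_sym2 hE hS
    rw [Set.ncard_eq_toFinset_card _ H.verts.toFinite]
    exact le_trans (by gcongr) (hle _)
  · rw [Subgraph.edgeSet_top, Subgraph.verts_top, hE, Set.ncard_coe_finset, Set.ncard_univ,
      Nat.card_eq_fintype_card]
    exact heq

end

def houseEdges : Finset (Sym2 (Fin 6)) :=
  {s(0, 4), s(4, 1), s(1, 2), s(2, 3), s(3, 0), s(0, 5), s(1, 5)}

lemma houseGraph_edgeSet : houseGraph.edgeSet = houseEdges := by
  refine Set.ext fun e => Sym2.ind (fun x y => ?_) e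
  simp only [houseGraph, mem_edgeSet, fromEdgeSet_adj, Set.mem_insert_iff,
    Set.mem_singleton_iff, houseEdges, Finset.coe_insert, Finset.coe_singleton]
  revert x y
  decide

lemma houseGraph_six_mul_card_inter_sym2_le (S : Finset (Fin 6)) :
    6 * (houseEdges ∩ S.sym2).card ≤ 7 * S.card := by
  revert S
  decide

lemma houseGraph_pairwise_edgeConflict :
    (houseEdges : Set (Sym2 (Fin 6))).Pairwise (EdgeConflict houseGraph) := by
  simp only [Set.Pairwise, EdgeConflict, houseGraph_edgeSet, Finset.mem_coe]
  decide

theorem stmt4 : MadEq houseGraph (7/3) ∧ 6 < strongChromaticIndex houseGraph := by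
  refine ⟨madEq_of_edgeSet_eq houseGraph_edgeSet (fun S => ?_)
    (by norm_num [show houseEdges.card = 7 from rfl]), ?_⟩
  · have h : (6 * (houseEdges ∩ S.sym2).card : ℚ) ≤ 7 * S.card := by
      exact_mod_cast houseGraph_six_mul_card_inter_sym2_le S
    linarith
  · calc (6 : ℕ∞) < houseEdges.card := by decide
      _ ≤ _ := card_le_strongChromaticIndex_of_pairwise houseGraph_pairwise_edgeConflict
end

section
/- Let G be the 8-vertex graph consisting of two vertices x and y joined by three internally disjoint paths of lengths 2, 2 and 3, together with an additional path of length 3 (having two new internal vertices) joining the internal vertex of one of the length-2 paths to the internal vertex of the other length-2 path. Then mad(G) = 5/2 and χ'_s(G) > 7. -/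
open SimpleGraph

/-!
Both halves reduce to finite checks on `figThreeGraph`. For the maximum average degree, every
vertex set `S` spans at most `5/4 · |S|` edges (checked over all `2⁸` subsets), with equality
for the whole graph (10 edges, 8 vertices). For the strong chromatic index, the eight edges other
than the middle edges `45` and `67` of the two paths of length 3 are pairwise at distance at
most two, so a strong edge-coloring gives them eight distinct colors.
-/

open Finset

section General

variable {V : Type*} {G : SimpleGraph V}

theorem IsStrongEdgeColoring.injOn {α : Type*} {c : Sym2 V → α} (hc : IsStrongEdgeColoring G c)
    {s : Set (Sym2 V)} (hs : s.Pairwise (EdgeConflict G)) : s.InjOn c := fun _ he₁ _ he₂ hce =>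
  by_contra fun hne => hc _ _ (hs he₁ he₂ hne) hce

theorem card_le_strongChromaticIndex {s : Finset (Sym2 V)}
    (hs : (s : Set (Sym2 V)).Pairwise (EdgeConflict G)) :
    (#s : ℕ∞) ≤ strongChromaticIndex G := by
  refine le_sInf ?_
  rintro _ ⟨k, rfl, c, hc⟩
  have hcard : #s ≤ #(univ : Finset (Fin k)) :=
    card_le_card_of_injOn c (fun _ _ => mem_univ _) (hc.injOn hs)
  simpa using hcard

theorem SimpleGraph.Subgraph.edgeSet_ncard_le_card_inter_sym2 [DecidableEq V] {E : Finset (Sym2 V)}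
    (H : G.Subgraph) (hE : G.edgeSet = E) {S : Finset V} (hS : (S : Set V) = H.verts) :
    H.edgeSet.ncard ≤ #(E ∩ S.sym2) := by
  have hsub : H.edgeSet ⊆ (E ∩ S.sym2 : Finset (Sym2 V)) := fun e he =>
    mem_inter.2 ⟨mem_coe.1 (hE ▸ H.edgeSet_subset he),
      mem_sym2_iff.2 fun _ hv => mem_coe.1 (hS ▸ H.mem_verts_of_mem_edge he hv)⟩
  exact (Set.ncard_le_ncard hsub (finite_toSet _)).trans_eq (Set.ncard_coe_finset _)

theorem madEq_of_edgeSet_eq_s5 [Finite V] [Nonempty V] [DecidableEq V] {E : Finset (Sym2 V)}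
    (hE : G.edgeSet = E) {q : ℚ}
    (hsparse : ∀ S : Finset V, 2 * (#(E ∩ S.sym2) : ℚ) ≤ q * #S)
    (hdense : 2 * (#E : ℚ) = q * Nat.card V) : MadEq G q := by
  refine ⟨fun H _ => ?_, ⊤, Set.univ_nonempty, ?_⟩
  · set S := H.verts.toFinite.toFinset
    have hspan : (H.edgeSet.ncard : ℚ) ≤ #(E ∩ S.sym2) := by
      exact_mod_cast H.edgeSet_ncard_le_card_inter_sym2 hE (Set.Finite.coe_toFinset _)
    rw [Set.ncard_eq_toFinset_card H.verts]
    linarith [hsparse S]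
  · rw [Subgraph.edgeSet_top, hE, Set.ncard_coe_finset, Subgraph.verts_top, Set.ncard_univ]
    exact hdense

end General

def figThreeEdges : Finset (Sym2 (Fin 8)) :=
  {s(0, 2), s(2, 1), s(0, 3), s(3, 1), s(0, 4), s(4, 5), s(5, 1), s(2, 6), s(6, 7), s(7, 3)}

theorem figThreeGraph_edgeSet : figThreeGraph.edgeSet = figThreeEdges := by
  ext e
  induction e using Sym2.ind with
  | _ a b =>
    simp only [mem_edgeSet, figThreeGraph, fromEdgeSet_adj, mem_coe]
    revert a b
    decide

set_option maxRecDepth 10000 in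
theorem figThreeGraph_sparse (S : Finset (Fin 8)) :
    4 * #(figThreeEdges ∩ S.sym2) ≤ 5 * #S := by
  revert S
  decide

theorem figThreeGraph_pairwise_conflict :
    ((figThreeEdges \ {s(4, 5), s(6, 7)} : Finset (Sym2 (Fin 8))) : Set (Sym2 (Fin 8))).Pairwise
      (EdgeConflict figThreeGraph) := by
  simp only [Set.Pairwise, mem_coe, EdgeConflict, figThreeGraph_edgeSet]
  decide

theorem stmt5 : MadEq figThreeGraph (5/2) ∧ 7 < strongChromaticIndex figThreeGraph := by
  constructor
  · refine madEq_of_edgeSet_eq_s5 figThreeGraph_edgeSet (fun S => ?_) ?_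
    · have h : 4 * (#(figThreeEdges ∩ S.sym2) : ℚ) ≤ 5 * #S := by
        exact_mod_cast figThreeGraph_sparse S
      linarith
    · rw [show #figThreeEdges = 10 by decide]
      norm_num
  · calc (7 : ℕ∞) < 8 := by norm_num
      _ = #(figThreeEdges \ {s(4, 5), s(6, 7)}) := by rfl
      _ ≤ strongChromaticIndex figThreeGraph :=
        card_le_strongChromaticIndex figThreeGraph_pairwise_conflict
end

section
/- Each of the graphs S_3, S_4 and S_7 satisfies mad(G) = 2 and χ'_s(G) ≥ 6. -/
open SimpleGraph

/-!
Let every vertex own one edge: cycle vertex `i` owns the cycle edge to `i + 1` and each leaf owns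
its pendant edge. This is a bijection from vertices to edges with every edge owned by one of its
endpoints, so a subgraph `H` has at most `|V(H)|` edges, with equality for the whole graph; hence
`mad = 2`.

In `S₃` and `S₄` any two edges are in conflict, so all six need distinct colours. In `S₇`, the three
cycle edges of a path `v_i v_{i+1} v_{i+2} v_{i+3}` together with the pendant edges at `v_{i+1}`,
`v_{i+2}` are pairwise in conflict. In a strong `5`-colouring each colour therefore occurs exactly
once in each of these seven windows, and counting incidences gives `3a + 2b = 7` for a colour on
`a` cycle edges and `b` pendant edges. But some colour repeats on the seven cycle edges, and `a ≥ 2` is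
incompatible with `3a + 2b = 7`.
-/

open SimpleGraph Sum

section Mad

variable {V : Type*} {G : SimpleGraph V}

theorem ncard_edgeSet_le_ncard_verts_of_owner [Finite V] {o : V → Sym2 V} (hmem : ∀ v, v ∈ o v)
    (hrange : Set.range o = G.edgeSet) (H : G.Subgraph) : H.edgeSet.ncard ≤ H.verts.ncard := by
  have hsub : H.edgeSet ⊆ o '' H.verts := by
    intro e he
    obtain ⟨v, rfl⟩ : e ∈ Set.range o := hrange ▸ H.edgeSet_subset he
    exact ⟨v, H.mem_verts_of_mem_edge he (hmem v), rfl⟩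
  exact (Set.ncard_le_ncard hsub).trans Set.ncard_image_le

theorem madEq_two_of_owner [Finite V] [Nonempty V] {o : V → Sym2 V} (hmem : ∀ v, v ∈ o v)
    (hinj : Function.Injective o) (hrange : Set.range o = G.edgeSet) : MadEq G 2 := by
  refine ⟨fun H _ => ?_, ⊤, by simp, ?_⟩
  · exact_mod_cast Nat.mul_le_mul_left 2 (ncard_edgeSet_le_ncard_verts_of_owner hmem hrange H)
  · rw [Subgraph.edgeSet_top, Subgraph.verts_top, ← hrange, Set.ncard_range_of_injective hinj,
      Set.ncard_univ]

end Mad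

section StrongColoring

variable {V α ι : Type*} {G : SimpleGraph V}

theorem IsStrongEdgeColoring.injective_comp {c : Sym2 V → α} (hc : IsStrongEdgeColoring G c)
    {l : ι → Sym2 V} (hl : Pairwise fun i j => EdgeConflict G (l i) (l j)) :
    Function.Injective (c ∘ l) := fun i j hij => by
  by_contra hne
  exact hc _ _ (hl hne) hij

theorem le_strongChromaticIndex {n : ℕ}
    (h : ∀ (k : ℕ) (c : Sym2 V → Fin k), IsStrongEdgeColoring G c → n ≤ k) :
    (n : ℕ∞) ≤ strongChromaticIndex G := by
  refine le_sInf ?_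
  rintro _ ⟨k, rfl, c, hc⟩
  exact_mod_cast h k c hc

theorem card_le_strongChromaticIndex_s6 [Fintype ι] {l : ι → Sym2 V}
    (hl : Pairwise fun i j => EdgeConflict G (l i) (l j)) :
    (Fintype.card ι : ℕ∞) ≤ strongChromaticIndex G :=
  le_strongChromaticIndex fun _ c hc => by
    simpa using Fintype.card_le_of_injective _ (hc.injective_comp hl)

instance [Fintype V] [DecidableEq V] [DecidablePred (· ∈ G.edgeSet)] (e₁ e₂ : Sym2 V) :
    Decidable (EdgeConflict G e₁ e₂) := by
  unfold EdgeConflict; infer_instance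

end StrongColoring

section Sgraph

variable (k : ℕ) [NeZero k]

instance : DecidableRel (Sgraph k).Adj := inferInstanceAs (DecidableRel (fromEdgeSet _).Adj)

def sgraphOwner : Fin k ⊕ Fin k → Sym2 (Fin k ⊕ Fin k) :=
  Sum.elim (fun i => s(inl i, inl (i + 1))) (fun i => s(inl i, inr i))

def sgraphWindow (i : Fin k) : Fin 5 → Sym2 (Fin k ⊕ Fin k) :=
  ![sgraphOwner k (inl i), sgraphOwner k (inl (i + 1)), sgraphOwner k (inl (i + 2)),
    sgraphOwner k (inr (i + 1)), sgraphOwner k (inr (i + 2))]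

variable {k}

theorem mem_sgraphOwner (v : Fin k ⊕ Fin k) : v ∈ sgraphOwner k v := by
  cases v <;> simp [sgraphOwner]

theorem range_sgraphOwner (hk : 2 ≤ k) : Set.range (sgraphOwner k) = (Sgraph k).edgeSet := by
  ext e
  simp only [Sgraph, edgeSet_fromEdgeSet, Set.mem_sdiff, Set.mem_ofPred_eq, Set.mem_range]
  constructor
  · rintro ⟨v | v, rfl⟩
    · have h1 : (1 : Fin k) ≠ 0 := by simp [Fin.ext_iff, Nat.mod_eq_of_lt (show 1 < k by omega)]
      exact ⟨⟨v, .inl rfl⟩, by simpa [sgraphOwner, eq_comm] using h1⟩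
    · exact ⟨⟨v, .inr rfl⟩, by simp [sgraphOwner]⟩
  · rintro ⟨⟨i, rfl | rfl⟩, -⟩
    exacts [⟨inl i, rfl⟩, ⟨inr i, rfl⟩]

theorem sgraphOwner_injective (hk : 3 ≤ k) : Function.Injective (sgraphOwner k) := by
  rintro (i | i) (j | j) h <;> simp [sgraphOwner] at h ⊢
  · obtain h | ⟨rfl, h⟩ := h
    · exact h
    · have h2 : (1 + 1 : Fin k) ≠ 0 := by
        simp [Fin.ext_iff, Fin.val_add, Nat.mod_eq_of_lt (show 1 < k by omega),
          Nat.mod_eq_of_lt (show 2 < k by omega)]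
      rw [add_assoc, add_eq_left] at h
      exact absurd h h2
  · exact h

theorem madEq_sgraph (hk : 3 ≤ k) : MadEq (Sgraph k) 2 :=
  madEq_two_of_owner mem_sgraphOwner (sgraphOwner_injective hk) (range_sgraphOwner (by omega))

end Sgraph

theorem pairwise_edgeConflict_sgraphOwner_three :
    Pairwise fun v w => EdgeConflict (Sgraph 3) (sgraphOwner 3 v) (sgraphOwner 3 w) := by
  unfold Pairwise; decide

theorem three_mul_sum_add_two_mul_sum_eq {n : ℕ} [NeZero n] (a b : Fin n → ℕ)
    (h : ∀ i, a i + a (i + 1) + a (i + 2) + b (i + 1) + b (i + 2) = 1) :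
    3 * ∑ i, a i + 2 * ∑ i, b i = n := by
  have shift (f : Fin n → ℕ) (d : Fin n) : ∑ i, f (i + d) = ∑ i, f i :=
    Fintype.sum_equiv (Equiv.addRight d) _ _ fun _ => rfl
  calc 3 * ∑ i, a i + 2 * ∑ i, b i
      = ∑ i, (a i + a (i + 1) + a (i + 2) + b (i + 1) + b (i + 2)) := by
        simp only [Finset.sum_add_distrib, shift]; ring
    _ = n := by simp [h]

theorem pairwise_edgeConflict_sgraphWindow_seven (i : Fin 7) :
    Pairwise fun j j' => EdgeConflict (Sgraph 7) (sgraphWindow 7 i j) (sgraphWindow 7 i j') := by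
  revert i; unfold Pairwise; decide

theorem six_le_of_isStrongEdgeColoring_sgraph_seven {k : ℕ} {c : Sym2 (Fin 7 ⊕ Fin 7) → Fin k}
    (hc : IsStrongEdgeColoring (Sgraph 7) c) : 6 ≤ k := by
  by_contra! hk
  have hinj i := hc.injective_comp (pairwise_edgeConflict_sgraphWindow_seven i)
  have h5 := Fintype.card_le_of_injective _ (hinj 0)
  simp only [Fintype.card_fin] at h5
  obtain rfl : k = 5 := by omega
  obtain ⟨i₀, i₁, hne, hsame⟩ :=
    Fintype.exists_ne_map_eq_of_card_lt (fun i : Fin 7 => c (sgraphOwner 7 (inl i))) (by simp)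
  set x := c (sgraphOwner 7 (inl i₀))
  let count : Fin 7 ⊕ Fin 7 → ℕ := fun v => if c (sgraphOwner 7 v) = x then 1 else 0
  have hwindow (i : Fin 7) : count (inl i) + count (inl (i + 1)) + count (inl (i + 2)) +
      count (inr (i + 1)) + count (inr (i + 2)) = 1 :=
    calc _ = ∑ j, if (c ∘ sgraphWindow 7 i) j = x then 1 else 0 := by
          rw [Fin.sum_univ_five]; rfl
      _ = ∑ y, if y = x then 1 else 0 :=
          Fintype.sum_bijective _ (Finite.injective_iff_bijective.1 (hinj i)) _ _ fun _ => rfl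
      _ = 1 := by simp
  have hrepeat : 2 ≤ ∑ i, count (inl i) :=
    calc 2 = ∑ i ∈ {i₀, i₁}, count (inl i) := by simp [Finset.sum_pair hne, count, x, ← hsame]
      _ ≤ ∑ i, count (inl i) := Finset.sum_le_sum_of_subset (Finset.subset_univ _)
  have := three_mul_sum_add_two_mul_sum_eq (fun i => count (inl i)) (fun i => count (inr i))
    hwindow
  omega

instance : DecidableRel S4graph.Adj := inferInstanceAs (DecidableRel (fromEdgeSet _).Adj)

def s4graphOwner : Fin 6 → Sym2 (Fin 6) :=
  ![s(0, 1), s(1, 2), s(2, 3), s(3, 0), s(0, 4), s(1, 5)]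

theorem range_s4graphOwner : Set.range s4graphOwner = S4graph.edgeSet := by
  ext e
  induction e using Sym2.ind
  revert ‹Fin 6›; revert ‹Fin 6›
  decide

theorem madEq_s4graph : MadEq S4graph 2 :=
  madEq_two_of_owner (by decide) (by decide) range_s4graphOwner

theorem pairwise_edgeConflict_s4graphOwner :
    Pairwise fun v w => EdgeConflict S4graph (s4graphOwner v) (s4graphOwner w) := by
  unfold Pairwise; decide

theorem stmt6 :
    (MadEq (Sgraph 3) 2 ∧ 6 ≤ strongChromaticIndex (Sgraph 3)) ∧
    (MadEq S4graph 2 ∧ 6 ≤ strongChromaticIndex S4graph) ∧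
    (MadEq (Sgraph 7) 2 ∧ 6 ≤ strongChromaticIndex (Sgraph 7)) := by
  refine ⟨⟨madEq_sgraph le_rfl, ?_⟩, ⟨madEq_s4graph, ?_⟩, ⟨madEq_sgraph (by norm_num), ?_⟩⟩
  · simpa using card_le_strongChromaticIndex_s6 pairwise_edgeConflict_sgraphOwner_three
  · simpa using card_le_strongChromaticIndex_s6 pairwise_edgeConflict_s4graphOwner
  · exact le_strongChromaticIndex fun _ _ => six_le_of_isStrongEdgeColoring_sgraph_seven
end

section
/- For every graph G ∈ {S_3, S_4, S_7} and every edge e of G, the graph G − e obtained by deleting the edge e admits a strong edge-coloring using 5 colors; that is, χ'_s(G − e) ≤ 5. In particular, S_3, S_4 and S_7 are 6-critical with respect to the strong chromatic index. -/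
open SimpleGraph

/-!
`S₃` and `S₄` have six edges, so after deleting one the remaining five edges can all receive
distinct colors. The rotations `i ↦ i + j` of `S₇` are automorphisms carrying every edge to the
cycle edge `s(0, 1)` or to the pendant edge at `0`, so only these two deletions need an explicit
strong `5`-edge-coloring, which is checked by enumerating the edges.
-/

variable {V W α : Type*}

section StrongEdgeColoring

variable {G : SimpleGraph V} {H : SimpleGraph W}

theorem strongChromaticIndex_le_of_isStrongEdgeColoring {k : ℕ} {c : Sym2 V → Fin k}
    (hc : IsStrongEdgeColoring G c) : strongChromaticIndex G ≤ k :=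
  sInf_le ⟨k, rfl, c, hc⟩

theorem EdgeConflict.map {e₁ e₂ : Sym2 V} (f : G →g H) (hf : Function.Injective f)
    (h : EdgeConflict G e₁ e₂) : EdgeConflict H (e₁.map f) (e₂.map f) := by
  have hmap := Sym2.map.injective hf
  have mem_map {v : V} {e : Sym2 V} (hv : v ∈ e) : f v ∈ e.map f := Sym2.mem_map.2 ⟨v, hv, rfl⟩
  obtain ⟨he₁, he₂, hne, ⟨v, hv₁, hv₂⟩ | ⟨e₃, he₃, hne₁, hne₂, ⟨v, hv₁, hv₃⟩, w, hw₂, hw₃⟩⟩ := h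
  · exact ⟨f.map_mem_edgeSet he₁, f.map_mem_edgeSet he₂, hmap.ne hne,
      .inl ⟨f v, mem_map hv₁, mem_map hv₂⟩⟩
  · exact ⟨f.map_mem_edgeSet he₁, f.map_mem_edgeSet he₂, hmap.ne hne,
      .inr ⟨e₃.map f, f.map_mem_edgeSet he₃, hmap.ne hne₁, hmap.ne hne₂,
        ⟨f v, mem_map hv₁, mem_map hv₃⟩, f w, mem_map hw₂, mem_map hw₃⟩⟩

theorem IsStrongEdgeColoring.comp_map {c : Sym2 W → α} (hc : IsStrongEdgeColoring H c)
    (f : G →g H) (hf : Function.Injective f) : IsStrongEdgeColoring G (c ∘ Sym2.map f) :=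
  fun _ _ h => hc _ _ (h.map f hf)

theorem strongChromaticIndex_le_of_injective (f : G →g H) (hf : Function.Injective f) :
    strongChromaticIndex G ≤ strongChromaticIndex H :=
  sInf_le_sInf fun _ ⟨k, hk, c, hc⟩ => ⟨k, hk, c ∘ Sym2.map f, hc.comp_map f hf⟩

theorem strongChromaticIndex_deleteEdges_le_of_injective (f : G →g H)
    (hf : Function.Injective f) (e : Sym2 V) :
    strongChromaticIndex (G.deleteEdges {e}) ≤ strongChromaticIndex (H.deleteEdges {e.map f}) :=
  strongChromaticIndex_le_of_injective (G := G.deleteEdges {e})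
    ⟨f, fun {x y} hxy => by
      rw [deleteEdges_adj, Set.mem_singleton_iff] at hxy ⊢
      exact ⟨f.map_adj hxy.1, fun h => hxy.2 (Sym2.map.injective hf (by simpa using h))⟩⟩ hf

theorem edgeSet_deleteEdges_singleton_subset [DecidableEq V] {E : Finset (Sym2 V)}
    (hE : G.edgeSet ⊆ E) (d : Sym2 V) : (G.deleteEdges {d}).edgeSet ⊆ E.erase d := by
  rw [edgeSet_deleteEdges, Finset.coe_erase]
  exact Set.sdiff_subset_sdiff_left hE

theorem strongChromaticIndex_le_of_edgeSet_subset {k : ℕ} [NeZero k] {E : Finset (Sym2 V)}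
    (hE : G.edgeSet ⊆ E) (hk : E.card ≤ k) : strongChromaticIndex G ≤ k := by
  classical
  refine strongChromaticIndex_le_of_isStrongEdgeColoring
    (c := fun e => if h : e ∈ E then Fin.castLE hk (E.equivFin ⟨e, h⟩) else 0) ?_
  rintro e₁ e₂ ⟨he₁, he₂, hne, -⟩
  dsimp only
  rw [dif_pos (Finset.mem_coe.1 (hE he₁)), dif_pos (Finset.mem_coe.1 (hE he₂))]
  exact fun h => hne (congrArg Subtype.val (E.equivFin.injective (Fin.castLE_injective hk h)))

theorem strongChromaticIndex_deleteEdges_le_of_edgeSet_subset {k : ℕ} [NeZero k]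
    {E : Finset (Sym2 V)} (hE : G.edgeSet ⊆ E) (hk : E.card ≤ k + 1) {e : Sym2 V}
    (he : e ∈ G.edgeSet) : strongChromaticIndex (G.deleteEdges {e}) ≤ k := by
  classical
  refine strongChromaticIndex_le_of_edgeSet_subset (edgeSet_deleteEdges_singleton_subset hE e) ?_
  rw [Finset.card_erase_of_mem (hE he)]
  omega

/-- `EdgeConflict` with the edge set replaced by a finset, which makes it decidable. -/
def FinsetEdgeConflict (E : Finset (Sym2 V)) (e₁ e₂ : Sym2 V) : Prop :=
  e₁ ∈ E ∧ e₂ ∈ E ∧ e₁ ≠ e₂ ∧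
    ((∃ v, v ∈ e₁ ∧ v ∈ e₂) ∨
      ∃ e₃ ∈ E, e₃ ≠ e₁ ∧ e₃ ≠ e₂ ∧ (∃ v, v ∈ e₁ ∧ v ∈ e₃) ∧ ∃ w, w ∈ e₂ ∧ w ∈ e₃)

instance [Fintype V] [DecidableEq V] (E : Finset (Sym2 V)) (e₁ e₂ : Sym2 V) :
    Decidable (FinsetEdgeConflict E e₁ e₂) := by
  unfold FinsetEdgeConflict; infer_instance

theorem EdgeConflict.finsetEdgeConflict {E : Finset (Sym2 V)} (hE : G.edgeSet ⊆ E)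
    {e₁ e₂ : Sym2 V} (h : EdgeConflict G e₁ e₂) : FinsetEdgeConflict E e₁ e₂ := by
  obtain ⟨he₁, he₂, hne, h⟩ := h
  exact ⟨hE he₁, hE he₂, hne, h.imp_right fun ⟨e₃, he₃, h⟩ => ⟨e₃, hE he₃, h⟩⟩

theorem isStrongEdgeColoring_of_edgeSet_subset {E : Finset (Sym2 V)} (hE : G.edgeSet ⊆ E)
    {c : Sym2 V → α} (h : ∀ e₁ ∈ E, ∀ e₂ ∈ E, FinsetEdgeConflict E e₁ e₂ → c e₁ ≠ c e₂) :
    IsStrongEdgeColoring G c := fun e₁ e₂ hc =>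
  have hc := hc.finsetEdgeConflict hE
  h e₁ hc.1 e₂ hc.2.1 hc

end StrongEdgeColoring

namespace Sgraph

variable {k : ℕ} [NeZero k]

theorem mem_edgeSet_iff {e : Sym2 (Fin k ⊕ Fin k)} : e ∈ (Sgraph k).edgeSet ↔
    (∃ i, e = s(Sum.inl i, Sum.inl (i + 1)) ∨ e = s(Sum.inl i, Sum.inr i)) ∧ ¬e.IsDiag := by
  rw [Sgraph, edgeSet_fromEdgeSet]
  rfl

def edges (k : ℕ) [NeZero k] : Finset (Sym2 (Fin k ⊕ Fin k)) :=
  Finset.univ.image (fun i => s(Sum.inl i, Sum.inl (i + 1))) ∪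
    Finset.univ.image fun i => s(Sum.inl i, Sum.inr i)

theorem edgeSet_subset_edges : (Sgraph k).edgeSet ⊆ edges k := by
  rintro e he
  obtain ⟨⟨i, rfl | rfl⟩, -⟩ := mem_edgeSet_iff.1 he <;> simp [edges]

theorem card_edges_le : (edges k).card ≤ 2 * k := by
  refine (Finset.card_union_le _ _).trans ?_
  grw [Finset.card_image_le, Finset.card_image_le, Finset.card_univ, Fintype.card_fin]
  omega

def rotate (j : Fin k) : Sgraph k →g Sgraph k where
  toFun := Sum.map (· + j) (· + j)
  map_rel' {x y} hxy := by
    rw [← SimpleGraph.mem_edgeSet, ← Sym2.map_mk, mem_edgeSet_iff,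
      Sym2.isDiag_map (Sum.map_injective.2 ⟨add_left_injective j, add_left_injective j⟩)]
    obtain ⟨⟨i, h⟩, hxy⟩ := mem_edgeSet_iff.1 ((Sgraph k).mem_edgeSet.2 hxy)
    refine ⟨⟨i + j, ?_⟩, hxy⟩
    rcases h with h | h <;> simp [h, add_right_comm]

theorem rotate_injective (j : Fin k) : Function.Injective (rotate j) :=
  show Function.Injective (Sum.map _ _) from
    Sum.map_injective.2 ⟨add_left_injective j, add_left_injective j⟩

theorem strongChromaticIndex_deleteEdges_le {n : ℕ∞}
    (hcycle : strongChromaticIndex ((Sgraph k).deleteEdges {s(Sum.inl 0, Sum.inl 1)}) ≤ n)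
    (hpendant : strongChromaticIndex ((Sgraph k).deleteEdges {s(Sum.inl 0, Sum.inr 0)}) ≤ n)
    {e : Sym2 (Fin k ⊕ Fin k)} (he : e ∈ (Sgraph k).edgeSet) :
    strongChromaticIndex ((Sgraph k).deleteEdges {e}) ≤ n := by
  obtain ⟨⟨i, rfl | rfl⟩, -⟩ := mem_edgeSet_iff.1 he <;>
  · refine (strongChromaticIndex_deleteEdges_le_of_injective _ (rotate_injective (-i)) _).trans ?_
    simpa [rotate]

def coloring [Inhabited α] (a b : Fin k → α) (e : Sym2 (Fin k ⊕ Fin k)) : α :=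
  ((List.ofFn (fun i => (s(Sum.inl i, Sum.inl (i + 1)), a i)) ++
    List.ofFn fun i => (s(Sum.inl i, Sum.inr i), b i)).lookup e).getD default

end Sgraph

theorem S4graph.edgeSet_subset : S4graph.edgeSet ⊆
    ({s(0, 1), s(1, 2), s(2, 3), s(3, 0), s(0, 4), s(1, 5)} : Finset (Sym2 (Fin 6))) := by
  rw [S4graph, edgeSet_fromEdgeSet]
  push_cast
  exact Set.sdiff_subset

-- In both colorings, the entry for the deleted edge is arbitrary.

set_option maxRecDepth 2000 in
theorem Sgraph.strongChromaticIndex_seven_deleteEdges_cycle_le :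
    strongChromaticIndex ((Sgraph 7).deleteEdges {s(Sum.inl 0, Sum.inl 1)}) ≤ 5 :=
  strongChromaticIndex_le_of_isStrongEdgeColoring
    (c := Sgraph.coloring ![0, 0, 1, 2, 0, 1, 2] ![0, 2, 3, 4, 3, 4, 3])
    (isStrongEdgeColoring_of_edgeSet_subset
      (edgeSet_deleteEdges_singleton_subset Sgraph.edgeSet_subset_edges _) (by decide))

set_option maxRecDepth 2000 in
theorem Sgraph.strongChromaticIndex_seven_deleteEdges_pendant_le :
    strongChromaticIndex ((Sgraph 7).deleteEdges {s(Sum.inl 0, Sum.inr 0)}) ≤ 5 :=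
  strongChromaticIndex_le_of_isStrongEdgeColoring
    (c := Sgraph.coloring ![0, 1, 2, 3, 1, 2, 4] ![0, 3, 4, 0, 4, 0, 3])
    (isStrongEdgeColoring_of_edgeSet_subset
      (edgeSet_deleteEdges_singleton_subset Sgraph.edgeSet_subset_edges _) (by decide))

theorem stmt7 :
    (∀ e ∈ (Sgraph 3).edgeSet, strongChromaticIndex ((Sgraph 3).deleteEdges {e}) ≤ 5) ∧
    (∀ e ∈ S4graph.edgeSet, strongChromaticIndex (S4graph.deleteEdges {e}) ≤ 5) ∧
    (∀ e ∈ (Sgraph 7).edgeSet, strongChromaticIndex ((Sgraph 7).deleteEdges {e}) ≤ 5) :=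
  ⟨fun _ => strongChromaticIndex_deleteEdges_le_of_edgeSet_subset Sgraph.edgeSet_subset_edges
      Sgraph.card_edges_le,
    fun _ => strongChromaticIndex_deleteEdges_le_of_edgeSet_subset S4graph.edgeSet_subset
      (by decide),
    fun _ => Sgraph.strongChromaticIndex_deleteEdges_le
      Sgraph.strongChromaticIndex_seven_deleteEdges_cycle_le
      Sgraph.strongChromaticIndex_seven_deleteEdges_pendant_le⟩
end
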